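/- Let K be a field with a valuation v : K → Γ₀, with valuation ring 𝒪 and maximal ideal 𝔪. Let g be a unit of 𝒪 (i.e. v(g) = 1) and let α ∈ K \ 𝒪. Set β = g·α and ε = (g⁻¹ − 1)/(g·α). Then ε ∈ 𝔪, β ∈ K \ 𝒪, and the following identity of 2×2 matrices over K holds: [[g, 0], [0, g⁻¹]] * [[α, 0], [1, α⁻¹]] = [[1, 0], [ε, 1]] * [[β, 0], [1, β⁻¹]]. -/

import Mathlib

namespace Valuation

variable {R K Γ₀ : Type*} [LinearOrderedCommGroupWithZero Γ₀]

lemma one_lt_map_mul_of_map_eq_one [Ring R] (v : Valuation R Γ₀) {g α : R} (hg : v g = 1)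
    (hα : 1 < v α) : 1 < v (g * α) := by
  rwa [v.map_mul, hg, one_mul]

variable [DivisionRing K] (v : Valuation K Γ₀)

lemma map_div_lt_one {x y : K} (h : v x < v y) : v (x / y) < 1 := by
  rw [v.map_div, div_lt_one₀ (zero_le.trans_lt h)]
  exact h

lemma map_inv_sub_one_le_one {g : K} (hg : v g = 1) : v (g⁻¹ - 1) ≤ 1 :=
  v.map_sub_le (by rw [map_inv₀, hg, inv_one]) v.map_one.le

end Valuation

lemma diagonal_mul_eq_lowerUnipotent_mul {K : Type*} [Field K] {g α : K} (hg : g ≠ 0)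
    (hα : α ≠ 0) :
    (!![g, 0; 0, g⁻¹] : Matrix (Fin 2) (Fin 2) K) * !![α, 0; 1, α⁻¹] =
      !![1, 0; (g⁻¹ - 1) / (g * α), 1] * !![g * α, 0; 1, (g * α)⁻¹] := by
  ext i j
  fin_cases i <;> fin_cases j <;> simp [Matrix.mul_apply]
  · field_simp
    ring
  · exact mul_comm _ _

/-- The matrix computation of Example 2.7: multiplying a point at infinity of the
curve `x ↦ [[x,0],[1,x⁻¹]]` by a diagonal matrix with unit entry `g` moves it by an
element of `μ` to another point of the curve. -/
theorem diagonal_matrix_identity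
    {K Γ₀ : Type*} [Field K] [LinearOrderedCommGroupWithZero Γ₀]
    (v : Valuation K Γ₀) (g α : K) (hg : v g = 1) (hα : 1 < v α)
    (ε β : K) (hβ : β = g * α) (hε : ε = (g⁻¹ - 1) / (g * α)) :
    v ε < 1 ∧ 1 < v β ∧
      (!![g, 0; 0, g⁻¹] : Matrix (Fin 2) (Fin 2) K) * !![α, 0; 1, α⁻¹] =
        !![1, 0; ε, 1] * !![β, 0; 1, β⁻¹] := by
  subst hβ hε
  have hgα : 1 < v (g * α) := v.one_lt_map_mul_of_map_eq_one hg hα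
  refine ⟨v.map_div_lt_one ((v.map_inv_sub_one_le_one hg).trans_lt hgα), hgα, ?_⟩
  exact diagonal_mul_eq_lowerUnipotent_mul (v.ne_zero_iff.mp (hg ▸ one_ne_zero))
    (v.ne_zero_iff.mp (zero_lt_one.trans hα).ne')
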